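/- Let A = diag(3,3,6,6), j_A = (1/3, 1/3, 1/6, 1/6), and let G₃ be the subgroup of (ℚ/ℤ)⁴ generated by j_A and g₃ = (2/3, 0, 1/3, 0), and G₄ the subgroup generated by j_A and g₄ = (0, 2/3, 1/3, 0). Then (noting Aᵀ = A) both groups are self-dual: G₃^T = G₃ and G₄^T = G₄. -/

import Mathlib

open scoped BigOperators
open Matrix

noncomputable section

abbrev QZ : Type := AddCircle (1 : ℚ)

def qz : ℚ →+ QZ := QuotientAddGroup.mk' _

def GA {n : ℕ} (A : Matrix (Fin n) (Fin n) ℤ) : AddSubgroup (Fin n → QZ) where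
  carrier := {g | ∀ i, ∑ j, A i j • g j = 0}
  zero_mem' := by intro i; simp
  add_mem' := by
    intro a b ha hb i
    simp only [Pi.add_apply, smul_add, Finset.sum_add_distrib, ha i, hb i, add_zero]
  neg_mem' := by
    intro a ha i
    simp only [Pi.neg_apply, smul_neg, Finset.sum_neg_distrib, ha i, neg_zero]

def SLA {n : ℕ} (A : Matrix (Fin n) (Fin n) ℤ) : AddSubgroup (Fin n → QZ) where
  carrier := {g | g ∈ GA A ∧ ∑ i, g i = 0}
  zero_mem' := ⟨(GA A).zero_mem, by simp⟩
  add_mem' := by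
    intro a b ha hb
    exact ⟨(GA A).add_mem ha.1 hb.1, by simp [Pi.add_apply, Finset.sum_add_distrib, ha.2, hb.2]⟩
  neg_mem' := by
    intro a ha
    exact ⟨(GA A).neg_mem ha.1, by simp [Pi.neg_apply, Finset.sum_neg_distrib, ha.2]⟩

def jA {n : ℕ} (A : Matrix (Fin n) (Fin n) ℤ) : Fin n → QZ :=
  fun i => qz (((A.map (Int.cast : ℤ → ℚ))⁻¹).mulVec 1 i)

/-- `v : ℚ^n` is a lift of `g : (ℚ/ℤ)^n`. -/
def IsLift {n : ℕ} (v : Fin n → ℚ) (g : Fin n → QZ) : Prop := ∀ i, qz (v i) = g i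

lemma qz_eq_zero_iff (q : ℚ) : qz q = 0 ↔ ∃ m : ℤ, (m : ℚ) = q := by
  constructor
  · intro h
    have : q ∈ AddSubgroup.zmultiples (1 : ℚ) := by
      rwa [qz, QuotientAddGroup.mk'_apply, QuotientAddGroup.eq_zero_iff] at h
    obtain ⟨k, hk⟩ := this
    exact ⟨k, by simpa using hk⟩
  · rintro ⟨m, rfl⟩
    rw [qz, QuotientAddGroup.mk'_apply, QuotientAddGroup.eq_zero_iff]
    exact ⟨m, by simp⟩

lemma exists_lift {n : ℕ} (g : Fin n → QZ) : ∃ v : Fin n → ℚ, IsLift v g := by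
  choose v hv using fun i => QuotientAddGroup.mk'_surjective _ (g i)
  exact ⟨v, hv⟩

lemma row_int {n : ℕ} {A : Matrix (Fin n) (Fin n) ℤ} {h : Fin n → QZ} (hh : h ∈ GA A)
    {vh : Fin n → ℚ} (hl : IsLift vh h) (i : Fin n) :
    ∃ m : ℤ, (m : ℚ) = ∑ j, (A i j : ℚ) * vh j := by
  have h0 : qz (∑ j, (A i j : ℚ) * vh j) = 0 := by
    have := hh i
    calc qz (∑ j, (A i j : ℚ) * vh j) = ∑ j, A i j • qz (vh j) := by
          rw [map_sum]
          refine Finset.sum_congr rfl fun j _ => ?_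
          rw [← map_zsmul qz, zsmul_eq_mul]
      _ = ∑ j, A i j • h j := by
          refine Finset.sum_congr rfl fun j _ => by rw [hl j]
      _ = 0 := hh i
  exact (qz_eq_zero_iff _).1 h0

/-- The Berglund–Hübsch dual `H^T` of a subgroup `H ≤ G_A`: all `g ∈ G_{Aᵀ}` such that
for every `h ∈ H` and all lifts `ĝ, ĥ ∈ ℚ^n` of `g, h`, the number `∑ᵢⱼ ĝᵢ Aᵢⱼ ĥⱼ` is an
integer. -/
def dual {n : ℕ} (A : Matrix (Fin n) (Fin n) ℤ) (H : AddSubgroup (Fin n → QZ))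
    (hH : H ≤ GA A) : AddSubgroup (Fin n → QZ) where
  carrier := {g | g ∈ GA Aᵀ ∧ ∀ h ∈ H, ∀ vg vh : Fin n → ℚ, IsLift vg g → IsLift vh h →
    ∃ m : ℤ, (m : ℚ) = ∑ i, ∑ j, vg i * (A i j : ℚ) * vh j}
  zero_mem' := by
    refine ⟨(GA Aᵀ).zero_mem, ?_⟩
    intro h hh vg vh lg lh
    have hg : ∀ i, ∃ m : ℤ, (m : ℚ) = vg i := by
      intro i
      exact (qz_eq_zero_iff _).1 ((lg i).trans rfl)
    choose mg hmg using hg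
    choose c hc using fun i => row_int (hH hh) lh i
    refine ⟨∑ i, mg i * c i, ?_⟩
    push_cast
    calc (∑ i, (mg i : ℚ) * (c i : ℚ))
        = ∑ i, vg i * ∑ j, (A i j : ℚ) * vh j := by
          refine Finset.sum_congr rfl fun i _ => by rw [hmg i, hc i]
      _ = ∑ i, ∑ j, vg i * (A i j : ℚ) * vh j := by
          refine Finset.sum_congr rfl fun i _ => ?_
          rw [Finset.mul_sum]
          exact Finset.sum_congr rfl fun j _ => (mul_assoc _ _ _).symm
  add_mem' := by
    intro a b ha hb
    refine ⟨(GA Aᵀ).add_mem ha.1 hb.1, ?_⟩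
    intro h hh vg vh lg lh
    obtain ⟨va, hva⟩ := exists_lift a
    have hvb : IsLift (vg - va) b := by
      intro i
      have : qz (vg i - va i) = qz (vg i) - qz (va i) := map_sub qz _ _
      rw [Pi.sub_apply, this, lg i, hva i, Pi.add_apply, add_sub_cancel_left]
    obtain ⟨m₁, e₁⟩ := ha.2 h hh va vh hva lh
    obtain ⟨m₂, e₂⟩ := hb.2 h hh (vg - va) vh hvb lh
    refine ⟨m₁ + m₂, ?_⟩
    push_cast
    rw [e₁, e₂, ← Finset.sum_add_distrib]
    refine Finset.sum_congr rfl fun i _ => ?_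
    rw [← Finset.sum_add_distrib]
    refine Finset.sum_congr rfl fun j _ => ?_
    simp only [Pi.sub_apply]
    ring
  neg_mem' := by
    intro a ha
    refine ⟨(GA Aᵀ).neg_mem ha.1, ?_⟩
    intro h hh vg vh lg lh
    have hvg : IsLift (-vg) a := by
      intro i
      have : qz (-(vg i)) = - qz (vg i) := map_neg qz _
      rw [Pi.neg_apply, this, lg i, Pi.neg_apply, neg_neg]
    obtain ⟨m, e⟩ := ha.2 h hh (-vg) vh hvg lh
    refine ⟨-m, ?_⟩
    push_cast
    rw [e, ← Finset.sum_neg_distrib]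
    refine Finset.sum_congr rfl fun i _ => ?_
    rw [← Finset.sum_neg_distrib]
    refine Finset.sum_congr rfl fun j _ => ?_
    simp only [Pi.neg_apply]
    ring

lemma dual_le {n : ℕ} (A : Matrix (Fin n) (Fin n) ℤ) (H : AddSubgroup (Fin n → QZ))
    (hH : H ≤ GA A) : dual A H hH ≤ GA Aᵀ := fun _ hg => hg.1

lemma SLA_le {n : ℕ} (A : Matrix (Fin n) (Fin n) ℤ) : SLA A ≤ GA A := fun _ hg => hg.1


lemma zsmul_qz (k : ℤ) (q : ℚ) : k • qz q = qz (k * q) := by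
  rw [← map_zsmul qz, zsmul_eq_mul]

lemma qz_one' : qz 1 = 0 := (qz_eq_zero_iff _).2 ⟨1, by norm_num⟩
lemma qz_two' : qz (3 * (2/3)) = 0 := (qz_eq_zero_iff _).2 ⟨2, by norm_num⟩
lemma qz_c1' : qz (6 * (1/3)) = 0 := (qz_eq_zero_iff _).2 ⟨2, by norm_num⟩
lemma qz_c2' : qz (3 * (1/3)) = 0 := (qz_eq_zero_iff _).2 ⟨1, by norm_num⟩
lemma qz_c3' : qz (6 * (1/6)) = 0 := (qz_eq_zero_iff _).2 ⟨1, by norm_num⟩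
lemma qz_c4' : qz 2 = 0 := (qz_eq_zero_iff _).2 ⟨2, by norm_num⟩
lemma qz_c5' : qz (6 * (2/3)) = 0 := (qz_eq_zero_iff _).2 ⟨4, by norm_num⟩
lemma qz_c6' : qz (6 * 3⁻¹) = 0 := (qz_eq_zero_iff _).2 ⟨2, by norm_num⟩

/-- The exponent matrix of `W = x³ + y³ + z⁶ + w⁶` (note `Aᵀ = A`). -/
def A13 : Matrix (Fin 4) (Fin 4) ℤ := Matrix.diagonal ![3, 3, 6, 6]

/-- The exponential grading element `j_A = (1/3, 1/3, 1/6, 1/6)`. -/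
def jvec13 : Fin 4 → QZ := ![qz (1/3), qz (1/3), qz (1/6), qz (1/6)]

/-- `G₃ = ⟨j_A, (2/3,0,1/3,0)⟩`. -/
def G3 : AddSubgroup (Fin 4 → QZ) :=
  AddSubgroup.closure {jvec13, ![qz (2/3), 0, qz (1/3), 0]}

lemma G3_le : G3 ≤ GA A13 := by
  rw [G3, AddSubgroup.closure_le]
  rintro x hx
  simp only [Set.mem_insert_iff, Set.mem_singleton_iff] at hx
  rcases hx with rfl | rfl <;>
  · show ∀ i, ∑ j, A13 i j • _ = 0
    intro i
    fin_cases i <;>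
      simp [A13, jvec13, Matrix.diagonal, Fin.sum_univ_four, zsmul_qz] <;>
      (first
        | exact qz_one'
        | exact qz_two'
        | exact qz_c1'
        | exact qz_c2'
        | exact qz_c3'
        | exact qz_c4'
        | exact qz_c5'
        | exact qz_c6')

/-- `G₄ = ⟨j_A, (0,2/3,1/3,0)⟩`. -/
def G4 : AddSubgroup (Fin 4 → QZ) :=
  AddSubgroup.closure {jvec13, ![0, qz (2/3), qz (1/3), 0]}

lemma G4_le : G4 ≤ GA A13 := by
  rw [G4, AddSubgroup.closure_le]
  rintro x hx
  simp only [Set.mem_insert_iff, Set.mem_singleton_iff] at hx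
  rcases hx with rfl | rfl <;>
  · show ∀ i, ∑ j, A13 i j • _ = 0
    intro i
    fin_cases i <;>
      simp [A13, jvec13, Matrix.diagonal, Fin.sum_univ_four, zsmul_qz] <;>
      (first
        | exact qz_one'
        | exact qz_two'
        | exact qz_c1'
        | exact qz_c2'
        | exact qz_c3'
        | exact qz_c4'
        | exact qz_c5'
        | exact qz_c6')

/-! Changing a lift of `g ∈ G_{Aᵀ}` or of `h ∈ G_A` by an integer vector changes `ĝᵀ A ĥ` by an
integer, so integrality of the pairing is a property of `(g, h)`, additive in `h`; hence it only
has to be checked on generators, which gives `G ≤ G^T` by four computations. Conversely, every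
element of `G_A` for `A = diag(3,3,6,6)` is `(x₁/3, x₂/3, x₃/6, x₄/6)` with `x ∈ ℤ⁴`, integrality
against the two generators is a pair of congruences on `x`, and these force
`g = x₄ j_A + ((x₃ - x₄)/2) gₖ`. -/

lemma qz_intCast_div_eq_zero_iff {z n : ℤ} (hn : n ≠ 0) : qz ((z : ℚ) / n) = 0 ↔ n ∣ z := by
  have hn' : (n : ℚ) ≠ 0 := Int.cast_ne_zero.2 hn
  rw [qz_eq_zero_iff]
  constructor
  · rintro ⟨m, hm⟩
    refine ⟨m, Int.cast_injective (α := ℚ) ?_⟩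
    push_cast
    rw [hm, mul_div_cancel₀ _ hn']
  · intro h
    exact ⟨z / n, Int.cast_div h hn'⟩

section Lifts

variable {n : ℕ} {g h : Fin n → QZ} {v w : Fin n → ℚ}

lemma isLift_zero : IsLift (0 : Fin n → ℚ) 0 := fun _ => map_zero qz

lemma IsLift.add (hv : IsLift v g) (hw : IsLift w h) : IsLift (v + w) (g + h) :=
  fun i => by simp [map_add, hv i, hw i]

lemma IsLift.neg (hv : IsLift v g) : IsLift (-v) (-g) :=
  fun i => by simp [map_neg, hv i]

lemma IsLift.exists_add_intCast (hv : IsLift v g) (hw : IsLift w g) :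
    ∃ p : Fin n → ℤ, w = v + fun i => (p i : ℚ) := by
  have hdiff : ∀ i, qz (w i - v i) = 0 := fun i => by rw [map_sub, hv i, hw i, sub_self]
  choose p hp using fun i => (qz_eq_zero_iff _).1 (hdiff i)
  exact ⟨p, funext fun i => by simp [hp]⟩

end Lifts

def pairing {n : ℕ} (A : Matrix (Fin n) (Fin n) ℤ) (u v : Fin n → ℚ) : ℚ :=
  ∑ i, ∑ j, u i * (A i j : ℚ) * v j

section Pairing

variable {n : ℕ} {A : Matrix (Fin n) (Fin n) ℤ} {g h : Fin n → QZ}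

lemma pairing_add_left (u u' v : Fin n → ℚ) :
    pairing A (u + u') v = pairing A u v + pairing A u' v := by
  simp only [pairing, Pi.add_apply, add_mul, Finset.sum_add_distrib]

lemma pairing_add_right (u v v' : Fin n → ℚ) :
    pairing A u (v + v') = pairing A u v + pairing A u v' := by
  simp only [pairing, Pi.add_apply, mul_add, Finset.sum_add_distrib]

lemma pairing_neg_right (u v : Fin n → ℚ) : pairing A u (-v) = -pairing A u v := by
  simp [pairing]

lemma pairing_transpose (u v : Fin n → ℚ) : pairing Aᵀ v u = pairing A u v := by
  rw [pairing, Finset.sum_comm]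
  exact Finset.sum_congr rfl fun i _ => Finset.sum_congr rfl fun j _ => by
    rw [transpose_apply]; ring

lemma qz_pairing_intCast_left (hh : h ∈ GA A) {v : Fin n → ℚ} (hv : IsLift v h)
    (p : Fin n → ℤ) : qz (pairing A (fun i => (p i : ℚ)) v) = 0 := by
  have hrow : ∀ i, ∑ j, A i j • h j = 0 := hh
  have hv : ∀ j, qz (v j) = h j := hv
  simp [pairing, map_sum, mul_assoc, ← zsmul_qz, hv, ← Finset.smul_sum, hrow]

lemma qz_pairing_intCast_right (hg : g ∈ GA Aᵀ) {u : Fin n → ℚ} (hu : IsLift u g)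
    (q : Fin n → ℤ) : qz (pairing A u (fun j => (q j : ℚ))) = 0 := by
  rw [← pairing_transpose]
  exact qz_pairing_intCast_left hg hu q

lemma qz_pairing_eq_of_isLift (hg : g ∈ GA Aᵀ) (hh : h ∈ GA A) {u u' v v' : Fin n → ℚ}
    (hu : IsLift u g) (hu' : IsLift u' g) (hv : IsLift v h) (hv' : IsLift v' h) :
    qz (pairing A u' v') = qz (pairing A u v) := by
  obtain ⟨p, rfl⟩ := hu.exists_add_intCast hu'
  obtain ⟨q, rfl⟩ := hv.exists_add_intCast hv'
  rw [pairing_add_left, map_add, qz_pairing_intCast_left hh hv', add_zero, pairing_add_right,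
    map_add, qz_pairing_intCast_right hg hu, add_zero]

lemma mem_dual_closure {S : Set (Fin n → QZ)} (hS : AddSubgroup.closure S ≤ GA A)
    (hg : g ∈ GA Aᵀ)
    (hgS : ∀ h ∈ S, ∃ u v, IsLift u g ∧ IsLift v h ∧ qz (pairing A u v) = 0) :
    g ∈ dual A (AddSubgroup.closure S) hS := by
  obtain ⟨u, hu⟩ := exists_lift g
  have key : ∀ h ∈ AddSubgroup.closure S, ∃ v, IsLift v h ∧ qz (pairing A u v) = 0 := by
    intro h hh
    induction hh using AddSubgroup.closure_induction with
    | mem h hh =>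
      obtain ⟨u₀, v, hu₀, hv, hpair⟩ := hgS h hh
      refine ⟨v, hv, ?_⟩
      rw [qz_pairing_eq_of_isLift hg (hS (AddSubgroup.subset_closure hh)) hu₀ hu hv hv, hpair]
    | zero => exact ⟨0, isLift_zero, by simp [pairing]⟩
    | add h h' _ _ ih ih' =>
      obtain ⟨v, hv, hpair⟩ := ih
      obtain ⟨v', hv', hpair'⟩ := ih'
      exact ⟨v + v', hv.add hv', by rw [pairing_add_right, map_add, hpair, hpair', add_zero]⟩
    | neg h _ ih =>
      obtain ⟨v, hv, hpair⟩ := ih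
      exact ⟨-v, hv.neg, by rw [pairing_neg_right, map_neg, hpair, neg_zero]⟩
  refine ⟨hg, fun h hh u' v' hu' hv' => (qz_eq_zero_iff (pairing A u' v')).1 ?_⟩
  obtain ⟨v, hv, hpair⟩ := key h hh
  rw [qz_pairing_eq_of_isLift hg (hS hh) hu hu' hv hv', hpair]

lemma le_dual_of_eq_closure {H : AddSubgroup (Fin n → QZ)} (hH : H ≤ GA A)
    {S : Set (Fin n → QZ)} (hHS : H = AddSubgroup.closure S) (hSt : S ⊆ GA Aᵀ)
    (hSS : ∀ g ∈ S, ∀ h ∈ S, ∃ u v, IsLift u g ∧ IsLift v h ∧ qz (pairing A u v) = 0) :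
    H ≤ dual A H hH := by
  subst hHS
  exact (AddSubgroup.closure_le _).2 fun g hg => mem_dual_closure hH (hSt hg) (hSS g hg)

end Pairing

def fracVec {n : ℕ} (d : Fin n → ℤ) : (Fin n → ℤ) →+ (Fin n → QZ) where
  toFun x i := qz ((x i : ℚ) / d i)
  map_zero' := by funext i; simp
  map_add' x y := by funext i; simp [add_div]

section FracVec

variable {n : ℕ} {d : Fin n → ℤ}

lemma isLift_fracVec (x : Fin n → ℤ) : IsLift (fun i => (x i : ℚ) / d i) (fracVec d x) :=
  fun _ => rfl

lemma exists_fracVec_eq_of_mem_GA_diagonal (hd : ∀ i, d i ≠ 0) {g : Fin n → QZ}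
    (hg : g ∈ GA (diagonal d)) : ∃ x, fracVec d x = g := by
  obtain ⟨v, hv⟩ := exists_lift g
  have htors : ∀ i, qz (d i * v i) = 0 := fun i => by
    simpa [diagonal_apply, ← zsmul_qz, hv i] using hg i
  choose x hx using fun i => (qz_eq_zero_iff _).1 (htors i)
  refine ⟨x, funext fun i => ?_⟩
  rw [← hv i]
  show qz _ = _
  rw [hx i, mul_div_cancel_left₀ _ (Int.cast_ne_zero.2 (hd i))]

lemma fracVec_eq_fracVec_of_dvd (hd : ∀ i, d i ≠ 0) {x y : Fin n → ℤ}
    (hxy : ∀ i, d i ∣ x i - y i) : fracVec d x = fracVec d y := by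
  funext i
  rw [← sub_eq_zero, ← Pi.sub_apply, ← map_sub]
  exact (qz_intCast_div_eq_zero_iff (hd i)).2 (hxy i)

lemma pairing_diagonal_fracVec (hd : ∀ i, d i ≠ 0) (x y : Fin n → ℤ) :
    pairing (diagonal d) (fun i => (x i : ℚ) / d i) (fun i => (y i : ℚ) / d i) =
      ∑ i, (x i * y i : ℚ) / d i := by
  refine Finset.sum_congr rfl fun i _ => ?_
  have hdi : (d i : ℚ) ≠ 0 := Int.cast_ne_zero.2 (hd i)
  rw [Finset.sum_eq_single i (fun j _ hji => by simp [diagonal_apply_ne _ hji.symm])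
    (by simp), diagonal_apply_eq]
  field_simp

end FracVec

section A13

local notation "exps" => (![3, 3, 6, 6] : Fin 4 → ℤ)

lemma A13_transpose : A13ᵀ = A13 := diagonal_transpose _

lemma exps_ne_zero : ∀ i, exps i ≠ 0 := by decide

/-- Six times the pairing of `fracVec exps x` with `fracVec exps y`. -/
def pairing13 (x y : Fin 4 → ℤ) : ℤ := 2 * (x 0 * y 0 + x 1 * y 1) + x 2 * y 2 + x 3 * y 3

lemma qz_pairing_A13_eq_zero_iff (x y : Fin 4 → ℤ) :
    qz (pairing A13 (fun i => (x i : ℚ) / exps i) (fun i => (y i : ℚ) / exps i)) = 0 ↔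
      6 ∣ pairing13 x y := by
  have hsum : ∑ i, (x i * y i : ℚ) / exps i = (pairing13 x y : ℚ) / (6 : ℤ) := by
    simp only [pairing13, Fin.sum_univ_four]
    push_cast
    ring
  rw [A13, pairing_diagonal_fracVec exps_ne_zero, hsum, qz_intCast_div_eq_zero_iff (by norm_num)]

lemma dual_A13_eq_self {H : AddSubgroup (Fin 4 → QZ)} (hH : H ≤ GA A13) {T : Set (Fin 4 → ℤ)}
    (hHT : H = AddSubgroup.closure (fracVec exps '' T))
    (hTT : ∀ x ∈ T, ∀ y ∈ T, 6 ∣ pairing13 x y)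
    (hT : ∀ x, (∀ y ∈ T, 6 ∣ pairing13 x y) → fracVec exps x ∈ H) :
    dual A13 H hH = H := by
  refine le_antisymm (fun g hg => ?_) (le_dual_of_eq_closure hH hHT (fun g hg => ?_) ?_)
  · have hg' : g ∈ GA A13 := by simpa only [A13_transpose] using hg.1
    obtain ⟨x, rfl⟩ := exists_fracVec_eq_of_mem_GA_diagonal exps_ne_zero hg'
    refine hT x fun y hy => (qz_pairing_A13_eq_zero_iff x y).1 ((qz_eq_zero_iff _).2 ?_)
    exact hg.2 _ (hHT ▸ AddSubgroup.subset_closure (Set.mem_image_of_mem _ hy)) _ _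
      (isLift_fracVec x) (isLift_fracVec y)
  · rw [A13_transpose]
    exact hH (hHT ▸ AddSubgroup.subset_closure hg)
  · rintro _ ⟨x, hx, rfl⟩ _ ⟨y, hy, rfl⟩
    exact ⟨_, _, isLift_fracVec x, isLift_fracVec y,
      (qz_pairing_A13_eq_zero_iff x y).2 (hTT x hx y hy)⟩

lemma G3_eq_closure_fracVec :
    G3 = AddSubgroup.closure (fracVec exps '' {![1, 1, 1, 1], ![2, 0, 2, 0]}) := by
  rw [G3, Set.image_pair]
  congr 3 <;> funext i <;> fin_cases i <;> norm_num [jvec13, fracVec]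

lemma G4_eq_closure_fracVec :
    G4 = AddSubgroup.closure (fracVec exps '' {![1, 1, 1, 1], ![0, 2, 2, 0]}) := by
  rw [G4, Set.image_pair]
  congr 3 <;> funext i <;> fin_cases i <;> norm_num [jvec13, fracVec]

lemma fracVec_mem_closure_of_dvd {x y : Fin 4 → ℤ}
    (hxy : ∀ i, exps i ∣ x i - (x 3 + (x 2 - x 3) / 2 * y i)) :
    fracVec exps x ∈ AddSubgroup.closure (fracVec exps '' {![1, 1, 1, 1], y}) := by
  have hx : fracVec exps x =
      x 3 • fracVec exps ![1, 1, 1, 1] + ((x 2 - x 3) / 2) • fracVec exps y := by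
    rw [← map_zsmul, ← map_zsmul, ← map_add]
    refine fracVec_eq_fracVec_of_dvd exps_ne_zero fun i => ?_
    convert hxy i using 2
    fin_cases i <;> simp
  rw [hx]
  exact add_mem (zsmul_mem (AddSubgroup.subset_closure (Set.mem_image_of_mem _ (by simp))) _)
    (zsmul_mem (AddSubgroup.subset_closure (Set.mem_image_of_mem _ (by simp))) _)

lemma fracVec_mem_G3 (x : Fin 4 → ℤ)
    (hx : ∀ y ∈ ({![1, 1, 1, 1], ![2, 0, 2, 0]} : Set (Fin 4 → ℤ)), 6 ∣ pairing13 x y) :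
    fracVec exps x ∈ G3 := by
  simp only [Set.mem_insert_iff, Set.mem_singleton_iff, forall_eq_or_imp, forall_eq, pairing13,
    cons_val_zero, cons_val_one, cons_val, mul_one, mul_zero, add_zero] at hx
  rw [G3_eq_closure_fracVec]
  refine fracVec_mem_closure_of_dvd fun i => ?_
  fin_cases i <;> simp <;> omega

lemma fracVec_mem_G4 (x : Fin 4 → ℤ)
    (hx : ∀ y ∈ ({![1, 1, 1, 1], ![0, 2, 2, 0]} : Set (Fin 4 → ℤ)), 6 ∣ pairing13 x y) :
    fracVec exps x ∈ G4 := by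
  simp only [Set.mem_insert_iff, Set.mem_singleton_iff, forall_eq_or_imp, forall_eq, pairing13,
    cons_val_zero, cons_val_one, cons_val, mul_one, mul_zero, zero_add, add_zero] at hx
  rw [G4_eq_closure_fracVec]
  refine fracVec_mem_closure_of_dvd fun i => ?_
  fin_cases i <;> simp <;> omega

end A13

/-- for `A = diag(3,3,6,6)` (so `Aᵀ = A`), the subgroups
`G₃ = ⟨j_A, (2/3,0,1/3,0)⟩` and `G₄ = ⟨j_A, (0,2/3,1/3,0)⟩` are self-dual:
`G₃^T = G₃` and `G₄^T = G₄`. -/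
theorem stmt13 : dual A13 G3 G3_le = G3 ∧ dual A13 G4 G4_le = G4 :=
  ⟨dual_A13_eq_self G3_le G3_eq_closure_fracVec (by simp [pairing13]) fracVec_mem_G3,
    dual_A13_eq_self G4_le G4_eq_closure_fracVec (by simp [pairing13]) fracVec_mem_G4⟩

end
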